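/- Define for $r \in [0, 1/2)$ the function $\mathcal{F}(r) = \frac{2\frac{r}{1-r}}{\left(1-\left(\frac{r}{1-r}\right)^2\right)^2}\left(\frac{r}{(1-r)^3} + \frac{r}{(1-r)^4}\right) + \frac{\left(\frac{r}{1-r}\right)^2}{1-2r} + \frac{2\left(\frac{r}{1-r}\right)^2}{1-\left(\frac{r}{1-r}\right)^2}\cdot\frac{1}{(1-r)^3} + \frac{r}{1-r} + \frac{r}{(1-r)^2}$. Then $\mathcal{F}$ is continuous on a neighborhood of $0$, $\mathcal{F}(0) = 0$, $\mathcal{F}$ is monotone increasing on $[0, 0.17]$, and $\mathcal{F}(r) < 1$ for all $r \in [0, 0.17]$. -/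

import Mathlib

open Real Filter Topology

/-- The explicit rational function `𝓕` arising in the smallness condition of Theorem 2. -/
noncomputable def Fcal (r : ℝ) : ℝ :=
  2 * (r / (1 - r)) / (1 - (r / (1 - r)) ^ 2) ^ 2 *
      (r / (1 - r) ^ 3 + r / (1 - r) ^ 4)
    + (r / (1 - r)) ^ 2 / (1 - 2 * r)
    + 2 * (r / (1 - r)) ^ 2 / (1 - (r / (1 - r)) ^ 2) * (1 / (1 - r) ^ 3)
    + r / (1 - r) + r / (1 - r) ^ 2

/-!
Writing `s = r / (1 - r)`, one has `1 - s ^ 2 = (1 - 2r) / (1 - r) ^ 2`, so for `r < 1/2` the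
function `𝓕` is a sum of five fractions whose denominators are products of powers of `1 - r`
and `1 - 2r`. These are positive and decreasing on `[0, 1/2)`, while the numerators are
nonnegative and increasing there (`r² (2 - r)` is increasing up to `r = 4/3`). Hence `𝓕` is
continuous on `(-∞, 1/2)`, increasing on `[0, 1/2)`, and `𝓕 r ≤ 𝓕 0.17 < 1` on `[0, 0.17]`.
-/

open Set

noncomputable def FcalReduced (r : ℝ) : ℝ :=
  2 * r ^ 2 * (2 - r) / ((1 - r) * (1 - 2 * r) ^ 2) + r ^ 2 / ((1 - r) ^ 2 * (1 - 2 * r))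
    + 2 * r ^ 2 / ((1 - r) ^ 3 * (1 - 2 * r)) + r / (1 - r) + r / (1 - r) ^ 2

theorem one_sub_div_one_sub_sq {r : ℝ} (hr : r ≠ 1) :
    1 - (r / (1 - r)) ^ 2 = (1 - 2 * r) / (1 - r) ^ 2 := by
  have : 1 - r ≠ 0 := sub_ne_zero.mpr hr.symm
  field_simp
  ring

theorem eqOn_Fcal_FcalReduced : EqOn Fcal FcalReduced (Iio (1 / 2)) := by
  intro r (hr : r < 1 / 2)
  have h1 : 1 - r ≠ 0 := by linarith
  have h2 : 1 - 2 * r ≠ 0 := by linarith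
  rw [Fcal, FcalReduced, one_sub_div_one_sub_sq (by linarith)]
  field_simp
  ring

theorem continuousOn_FcalReduced : ContinuousOn FcalReduced (Iio (1 / 2)) := by
  unfold FcalReduced
  fun_prop (disch :=
    intro r (hr : r < 1 / 2)
    have : 0 < 1 - r := by linarith
    have : 0 < 1 - 2 * r := by linarith
    positivity)

theorem monotoneOn_sq_mul_two_sub : MonotoneOn (fun r : ℝ => r ^ 2 * (2 - r)) (Icc 0 (4 / 3)) := by
  rintro a ⟨ha0, ha⟩ b ⟨hb0, hb⟩ (hab : a ≤ b)
  have key : a ^ 2 + a * b + b ^ 2 ≤ 2 * (a + b) := by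
    nlinarith [mul_nonneg ha0 (sub_nonneg.2 ha), mul_nonneg hb0 (sub_nonneg.2 hb), sq_nonneg (a - b)]
  change a ^ 2 * (2 - a) ≤ b ^ 2 * (2 - b)
  nlinarith [mul_nonneg (sub_nonneg.2 hab) (sub_nonneg.2 key)]

theorem monotoneOn_FcalReduced : MonotoneOn FcalReduced (Ico 0 (1 / 2)) := by
  rintro a ⟨ha0, ha⟩ b ⟨hb0, hb⟩ hab
  have hcubic : a ^ 2 * (2 - a) ≤ b ^ 2 * (2 - b) :=
    monotoneOn_sq_mul_two_sub ⟨ha0, by linarith⟩ ⟨hb0, by linarith⟩ hab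
  have : 0 < 1 - a := by linarith
  have : 0 < 1 - b := by linarith
  have : 0 < 1 - 2 * b := by linarith
  have : 0 < 2 - b := by linarith
  unfold FcalReduced
  gcongr ?_ + ?_ + ?_ + ?_ + ?_ <;> gcongr ?_ / ?_ <;> first | linarith | gcongr

/-- `𝓕` is continuous in a neighborhood of `0`, `𝓕(0) = 0`, `𝓕` is monotone increasing on
`[0, 0.17]` and `𝓕(r) < 1` for all `r ∈ [0, 0.17]`. -/
theorem Fcal_properties :
    (∃ U ∈ 𝓝 (0:ℝ), ContinuousOn Fcal U) ∧
    Fcal 0 = 0 ∧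
    MonotoneOn Fcal (Set.Icc (0:ℝ) 0.17) ∧
    ∀ r ∈ Set.Icc (0:ℝ) 0.17, Fcal r < 1 := by
  have hmono : MonotoneOn Fcal (Icc 0 0.17) :=
    (monotoneOn_FcalReduced.congr (eqOn_Fcal_FcalReduced.mono Ico_subset_Iio_self).symm).mono
      (Icc_subset_Ico_right (by norm_num))
  refine ⟨⟨Iio (1 / 2), Iio_mem_nhds (by norm_num),
    continuousOn_FcalReduced.congr eqOn_Fcal_FcalReduced⟩, by norm_num [Fcal], hmono, ?_⟩
  intro r hr
  calc Fcal r ≤ Fcal 0.17 := hmono hr (right_mem_Icc.2 (by norm_num)) hr.2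
    _ < 1 := by norm_num [Fcal]
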